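/- Tight closure of ideals is glueable: let p be a prime, let R be a Noetherian commutative ring of characteristic p, let (f_α)_{α∈A} be elements of R, and let g be an element of the radical of the ideal generated by the f_α. Let I be an ideal of R and z ∈ R such that for every α ∈ A, the image z/1 of z in R_{f_α} lies in the tight closure (I·R_{f_α})^*. Then the image z/1 of z in R_g lies in the tight closure (I·R_g)^*. -/

import Mathlib

/-- `offMinimal S` is `S°`, the set of elements of `S` lying outside every minimal prime. -/
def offMinimal (S : Type*) [CommRing S] : Set S :=
  {c : S | ∀ P ∈ minimalPrimes S, c ∉ P}

/-- The bracket power `J^[q]`, generated by `q`-th powers of elements of `J`. -/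
def bracketPow {S : Type*} [CommRing S] (J : Ideal S) (q : ℕ) : Ideal S :=
  Ideal.span ((fun a => a ^ q) '' (J : Set S))

/-- The tight closure `J^*` of an ideal `J` in a ring of characteristic `p`. -/
def tightClosure (p : ℕ) {S : Type*} [CommRing S] (J : Ideal S) : Set S :=
  {z : S | ∃ c ∈ offMinimal S, ∃ e₀ : ℕ, ∀ e : ℕ, e₀ ≤ e →
    c * z ^ p ^ e ∈ bracketPow J (p ^ e)}

/-!
Fix a minimal prime `P` of `R`. The `f ∈ R` for which `z / 1 ∈ (I R_f)^*` holds with a test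
element `d / f ^ k`, `d ∉ P`, form a radical ideal: test elements multiply, and if `f ^ t` and
`f' ^ t'` both push `c z^q` into `I^[q]`, so does `(f + f') ^ (t + t' - 1)`. This ideal
contains `P`, because some power of an element of a minimal prime `P` is killed by an element
outside `P`, and it contains every `f α ∉ P`, because `P R_{f α}` is a minimal prime of
`R_{f α}`. So it contains `g`. Over `R_g` this gives, for each of its finitely many minimal
primes, a test element outside it, and prime avoidance produces one outside all of them.
-/

open Filter

section TightMultipliers

variable {S : Type*} [CommRing S]

def tightMultipliers (p : ℕ) (J : Ideal S) (z : S) : Ideal S where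
  carrier := {c | ∀ᶠ e in atTop, c * z ^ p ^ e ∈ bracketPow J (p ^ e)}
  zero_mem' := .of_forall fun e => by simp
  add_mem' ha hb := (ha.and hb).mono fun e h => by rw [add_mul]; exact add_mem h.1 h.2
  smul_mem' r _ hc := hc.mono fun e h => by
    rw [smul_eq_mul, mul_assoc]
    exact Ideal.mul_mem_left _ r h

theorem mem_tightClosure_iff_exists_mem_tightMultipliers {p : ℕ} {J : Ideal S} {z : S} :
    z ∈ tightClosure p J ↔ ∃ c ∈ offMinimal S, c ∈ tightMultipliers p J z := by
  simp only [tightClosure, Set.mem_ofPred_eq, tightMultipliers, Submodule.mem_mk,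
    AddSubmonoid.mem_mk, AddSubsemigroup.mem_mk, eventually_atTop]

theorem mem_tightClosure_of_forall_not_le {p : ℕ} {J : Ideal S} {z : S}
    (hS : (minimalPrimes S).Finite) (h : ∀ Q ∈ minimalPrimes S, ¬ tightMultipliers p J z ≤ Q) :
    z ∈ tightClosure p J := by
  have hnot : ¬ ((tightMultipliers p J z : Set S) ⊆ ⋃ Q ∈ (hS.toFinset : Set (Ideal S)), Q) := by
    rw [Ideal.subset_union_prime ⊥ ⊥ fun Q hQ _ _ => (hS.mem_toFinset.1 hQ).isPrime]
    rintro ⟨Q, hQ, hle⟩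
    exact h Q (hS.mem_toFinset.1 hQ) hle
  obtain ⟨c, hc, hcQ⟩ := Set.not_subset.1 hnot
  refine mem_tightClosure_iff_exists_mem_tightMultipliers.2 ⟨c, fun Q hQ hcQ' => hcQ ?_, hc⟩
  exact Set.mem_biUnion (hS.mem_toFinset.2 hQ) hcQ'

end TightMultipliers

theorem map_bracketPow_le {R S : Type*} [CommRing R] [CommRing S] (φ : R →+* S)
    (J : Ideal R) (q : ℕ) : (bracketPow J q).map φ ≤ bracketPow (J.map φ) q := by
  rw [bracketPow, Ideal.map_span, Ideal.span_le]
  rintro _ ⟨_, ⟨a, ha, rfl⟩, rfl⟩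
  exact Ideal.subset_span ⟨φ a, Ideal.mem_map_of_mem φ ha, (map_pow φ a q).symm⟩

namespace IsLocalization

variable {R S : Type*} [CommRing R] [CommRing S] [Algebra R S]

theorem bracketPow_map (M : Submonoid R) [IsLocalization M S] (J : Ideal R) (q : ℕ) :
    bracketPow (J.map (algebraMap R S)) q = (bracketPow J q).map (algebraMap R S) := by
  refine le_antisymm ?_ (map_bracketPow_le _ J q)
  rw [bracketPow, Ideal.span_le]
  rintro _ ⟨a, ha, rfl⟩
  obtain ⟨⟨x, m⟩, hxm⟩ := (mem_map_algebraMap_iff M S).1 ha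
  rw [SetLike.mem_coe, ← Ideal.mul_unit_mem_iff_mem _ ((map_units S m).pow q), ← mul_pow, hxm,
    ← map_pow]
  exact Ideal.mem_map_of_mem _ (Ideal.subset_span ⟨x, x.2, rfl⟩)

theorem mem_minimalPrimes_iff_under (M : Submonoid R) [IsLocalization M S] {Q : Ideal S} :
    Q ∈ minimalPrimes S ↔ Q.under R ∈ minimalPrimes R := by
  show Q ∈ (⊥ : Ideal S).minimalPrimes ↔ _
  rw [← Ideal.map_bot (f := algebraMap R S), minimalPrimes_map M S]
  rfl

end IsLocalization

namespace IsLocalization.Away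

variable {R S : Type*} [CommRing R] [CommRing S] [Algebra R S] {f : R} [IsLocalization.Away f S]

theorem algebraMap_mem_map_iff {J : Ideal R} {x : R} :
    algebraMap R S x ∈ J.map (algebraMap R S) ↔ ∃ t : ℕ, f ^ t * x ∈ J := by
  simp [algebraMap_mem_map_algebraMap_iff (Submonoid.powers f), Submonoid.mem_powers_iff]

theorem algebraMap_mem_tightMultipliers_iff {p : ℕ} {I : Ideal R} {z c : R} :
    algebraMap R S c ∈ tightMultipliers p (I.map (algebraMap R S)) (algebraMap R S z) ↔
      ∀ᶠ e in atTop, ∃ t : ℕ, f ^ t * (c * z ^ p ^ e) ∈ bracketPow I (p ^ e) := by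
  simp only [tightMultipliers, Submodule.mem_mk, AddSubmonoid.mem_mk, AddSubsemigroup.mem_mk,
    Set.mem_ofPred_eq, bracketPow_map (Submonoid.powers f), ← map_pow, ← map_mul,
    algebraMap_mem_map_iff (f := f)]

end IsLocalization.Away

theorem Ideal.exists_mul_pow_eq_zero_of_mem_minimalPrimes {R : Type*} [CommRing R]
    {P : Ideal R} (hP : P ∈ minimalPrimes R) {x : R} (hx : x ∈ P) :
    ∃ s ∉ P, ∃ n : ℕ, s * x ^ n = 0 := by
  have := hP.isPrime
  let φ := algebraMap R (Localization.AtPrime P)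
  have hrad := IsLocalization.AtPrime.radical_map_of_mem_minimalPrimes
    (Localization.AtPrime P) P ⊥ hP
  rw [Ideal.map_bot] at hrad
  obtain ⟨n, hn⟩ : φ x ∈ (⊥ : Ideal (Localization.AtPrime P)).radical :=
    hrad ▸ Ideal.mem_map_of_mem φ hx
  rw [Ideal.mem_bot, ← map_pow, IsLocalization.map_eq_zero_iff P.primeCompl] at hn
  obtain ⟨⟨s, hs⟩, hsx⟩ := hn
  exact ⟨s, hs, n, hsx⟩

section TightLocus

variable {R : Type*} [CommRing R]

/-- `f ∈ tightLocus p I z P` says that `z / 1 ∈ (I R_f)^*` with a test element `d / f ^ k`,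
`d ∉ P`. -/
def tightLocus (p : ℕ) (I : Ideal R) (z : R) (P : Ideal R) [P.IsPrime] : Ideal R where
  carrier := {f | ∃ c ∉ P, ∀ᶠ e in atTop, ∃ t : ℕ, f ^ t * (c * z ^ p ^ e) ∈ bracketPow I (p ^ e)}
  zero_mem' :=
    ⟨1, (Ideal.ne_top_iff_one P).1 (Ideal.IsPrime.ne_top ‹_›), .of_forall fun e => ⟨1, by simp⟩⟩
  add_mem' := by
    rintro f f' ⟨c, hc, hf⟩ ⟨c', hc', hf'⟩
    refine ⟨c * c', ‹P.IsPrime›.mul_notMem hc hc', (hf.and hf').mono ?_⟩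
    rintro e ⟨⟨t, ht⟩, ⟨t', ht'⟩⟩
    let K := (bracketPow I (p ^ e)).colon {c * c' * z ^ p ^ e}
    have hft : f ^ t ∈ K := Submodule.mem_colon_singleton.2 <| by
      rw [smul_eq_mul, show f ^ t * (c * c' * z ^ p ^ e) = c' * (f ^ t * (c * z ^ p ^ e)) by ring]
      exact Ideal.mul_mem_left _ _ ht
    have hft' : f' ^ t' ∈ K := Submodule.mem_colon_singleton.2 <| by
      rw [smul_eq_mul, show f' ^ t' * (c * c' * z ^ p ^ e) = c * (f' ^ t' * (c' * z ^ p ^ e)) by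
        ring]
      exact Ideal.mul_mem_left _ _ ht'
    have hsum := Submodule.mem_colon_singleton.1 (K.add_pow_add_pred_mem_of_pow_mem hft hft')
    exact ⟨t + t' - 1, by simpa [mul_assoc] using hsum⟩
  smul_mem' := by
    rintro r f ⟨c, hc, hf⟩
    refine ⟨c, hc, hf.mono fun e ⟨t, ht⟩ => ⟨t, ?_⟩⟩
    rw [smul_eq_mul, mul_pow, mul_assoc]
    exact Ideal.mul_mem_left _ _ ht

variable {p : ℕ} {I : Ideal R} {z : R} {P : Ideal R} [P.IsPrime]

theorem tightLocus_isRadical : (tightLocus p I z P).IsRadical := by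
  rintro f ⟨k, c, hc, hf⟩
  exact ⟨c, hc, hf.mono fun e ⟨t, ht⟩ => ⟨k * t, by rwa [pow_mul]⟩⟩

theorem le_tightLocus_of_mem_minimalPrimes (hP : P ∈ minimalPrimes R) :
    P ≤ tightLocus p I z P := by
  intro f hf
  obtain ⟨s, hs, n, hsf⟩ := Ideal.exists_mul_pow_eq_zero_of_mem_minimalPrimes hP hf
  refine ⟨s, hs, .of_forall fun e => ⟨n, ?_⟩⟩
  rw [← mul_assoc, mul_comm _ s, hsf, zero_mul]
  exact zero_mem _

theorem mem_tightLocus_of_mem_tightClosure_away {S : Type*} [CommRing S] [Algebra R S] {f : R}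
    [IsLocalization.Away f S]
    (hP : P ∈ minimalPrimes R) (hfP : f ∉ P)
    (hz : algebraMap R S z ∈ tightClosure p (I.map (algebraMap R S))) :
    f ∈ tightLocus p I z P := by
  obtain ⟨c, hc, hcz⟩ := mem_tightClosure_iff_exists_mem_tightMultipliers.1 hz
  obtain ⟨⟨d, m⟩, hdm⟩ := IsLocalization.surj (Submonoid.powers f) c
  refine ⟨d, fun hd => ?_,
    (IsLocalization.Away.algebraMap_mem_tightMultipliers_iff (S := S)).1 ?_⟩
  · have hdisj := (Ideal.disjoint_powers_iff_notMem_of_isPrime f).2 hfP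
    have hQ := IsLocalization.isPrime_of_isPrime_disjoint _ S P ‹_› hdisj
    have hQmin : P.map (algebraMap R S) ∈ minimalPrimes S := by
      rwa [IsLocalization.mem_minimalPrimes_iff_under (Submonoid.powers f),
        IsLocalization.under_map_of_isPrime_disjoint _ S ‹_› hdisj]
    have hcm : c * algebraMap R S m ∈ P.map (algebraMap R S) := hdm ▸ Ideal.mem_map_of_mem _ hd
    rcases hQ.mem_or_mem hcm with h | h
    · exact hc _ hQmin h
    · exact hQ.ne_top (Ideal.eq_top_of_isUnit_mem _ h (IsLocalization.map_units S m))
  · rw [← hdm]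
    exact Ideal.mul_mem_right _ _ hcz

end TightLocus

theorem mem_tightClosure_away_of_forall_mem_tightLocus {R S : Type*} [CommRing R] [CommRing S]
    [Algebra R S] {p : ℕ} {I : Ideal R} {z g : R} [IsLocalization.Away g S]
    (hS : (minimalPrimes S).Finite)
    (h : ∀ (P : Ideal R) [P.IsPrime], P ∈ minimalPrimes R → g ∉ P → g ∈ tightLocus p I z P) :
    algebraMap R S z ∈ tightClosure p (I.map (algebraMap R S)) := by
  refine mem_tightClosure_of_forall_not_le hS fun Q hQ hle => ?_
  have hQR := (IsLocalization.mem_minimalPrimes_iff_under (Submonoid.powers g)).1 hQ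
  have := hQR.isPrime
  have hgQ : g ∉ Q.under R := fun hg =>
    hQ.isPrime.ne_top (Ideal.eq_top_of_isUnit_mem _ hg (IsLocalization.Away.algebraMap_isUnit g))
  obtain ⟨c, hc, hcz⟩ := h _ hQR hgQ
  exact hc (hle (IsLocalization.Away.algebraMap_mem_tightMultipliers_iff.2 hcz))

theorem tightClosure_glueable_general (p : ℕ)
    {R : Type*} [CommRing R] [IsNoetherianRing R]
    {A : Type*} (f : A → R) (g : R)
    (hg : g ∈ (Ideal.span (Set.range f)).radical)
    (I : Ideal R) (z : R)
    (hz : ∀ α : A, algebraMap R (Localization.Away (f α)) z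
        ∈ tightClosure p (I.map (algebraMap R (Localization.Away (f α))))) :
    algebraMap R (Localization.Away g) z
      ∈ tightClosure p (I.map (algebraMap R (Localization.Away g))) := by
  refine mem_tightClosure_away_of_forall_mem_tightLocus (g := g)
    (minimalPrimes.finite_of_isNoetherianRing _) fun P _ hP hgP => ?_
  have hf : Set.range f ⊆ tightLocus p I z P := by
    rintro _ ⟨α, rfl⟩
    by_cases hαP : f α ∈ P
    · exact le_tightLocus_of_mem_minimalPrimes hP hαP
    · exact mem_tightLocus_of_mem_tightClosure_away hP hαP (hz α)
  exact tightLocus_isRadical (Ideal.radical_mono (Ideal.span_le.2 hf) hg)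

/-- tight closure of ideals is glueable. -/
theorem tightClosure_glueable (p : ℕ) (hp : p.Prime)
    {R : Type*} [CommRing R] [IsNoetherianRing R] [CharP R p]
    {A : Type*} (f : A → R) (g : R)
    (hg : g ∈ (Ideal.span (Set.range f)).radical)
    (I : Ideal R) (z : R)
    (hz : ∀ α : A, algebraMap R (Localization.Away (f α)) z
        ∈ tightClosure p (I.map (algebraMap R (Localization.Away (f α))))) :
    algebraMap R (Localization.Away g) z
      ∈ tightClosure p (I.map (algebraMap R (Localization.Away g))) :=
  tightClosure_glueable_general p f g hg I z hz
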